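/- arXiv:1502.04298 — 3 statements merged into one kernel-verified Lean document; each statement's English description precedes it below -/
import Mathlib

section
/- Let A be an F-algebra, L a two-sided ideal of A, and R = F[t₁,…,t_n] a polynomial algebra acting F-linearly on L such that f·(ax) = (f·a)x and f·(xa) = x(f·a) for all x ∈ A, a ∈ L, f ∈ R. Then the natural map A → A' = (R ⊗_F A)/⟨t_i ⊗ a − 1 ⊗ (t_i·a) : a ∈ L, i = 1,…,n⟩ is injective. -/
open TensorProduct

set_option maxHeartbeats 1600000

/-- Interpretation Lemma: Let A be an F-algebra, L a two-sided ideal of A, and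
R = F[t₁,…,tₙ] a polynomial algebra acting F-linearly on L such that the action commutes with
the A-bimodule structure of L.  Then the natural map
A → A' = (R ⊗_F A)/⟨tᵢ ⊗ a − 1 ⊗ (tᵢ·a) : a ∈ L⟩, a ↦ 1 ⊗ a, is injective. -/
theorem stmt_6 (F : Type) [Field F] (A : Type) [Ring A] [Algebra F A] (n : ℕ)
    (L : Submodule F A)
    (hmulr : ∀ a ∈ L, ∀ x : A, a * x ∈ L)
    (hmull : ∀ a ∈ L, ∀ x : A, x * a ∈ L)
    (ρ : MvPolynomial (Fin n) F →ₐ[F] Module.End F ↥L)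
    (hr : ∀ (f : MvPolynomial (Fin n) F) (a : ↥L) (x : A),
      ((ρ f ⟨(a : A) * x, hmulr (a : A) a.2 x⟩ : ↥L) : A) = ((ρ f a : ↥L) : A) * x)
    (hl : ∀ (f : MvPolynomial (Fin n) F) (a : ↥L) (x : A),
      ((ρ f ⟨x * (a : A), hmull (a : A) a.2 x⟩ : ↥L) : A) = x * ((ρ f a : ↥L) : A)) :
    Function.Injective (fun a : A =>
      ((((1 : MvPolynomial (Fin n) F) ⊗ₜ[F] a : MvPolynomial (Fin n) F ⊗[F] A)) :
        (TwoSidedIdeal.span {z : MvPolynomial (Fin n) F ⊗[F] A |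
          ∃ (i : Fin n) (b : ↥L),
            z = (MvPolynomial.X i) ⊗ₜ[F] (b : A)
              - (1 : MvPolynomial (Fin n) F) ⊗ₜ[F] ((ρ (MvPolynomial.X i) b : ↥L) : A)
          }).ringCon.Quotient)) := by
  classical
  set R := MvPolynomial (Fin n) F with hR
  -- projection onto L
  obtain ⟨q, hq⟩ := Submodule.exists_isCompl L
  set p : A →ₗ[F] ↥L := L.linearProjOfIsCompl q hq with hp
  have hpL : ∀ (v : A) (hv : v ∈ L), p v = ⟨v, hv⟩ := fun v hv =>
    Submodule.linearProjOfIsCompl_apply_left hq ⟨v, hv⟩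
  -- evaluation at 0
  set ε : R →ₐ[F] F := MvPolynomial.aeval (fun _ : Fin n => (0 : F)) with hε
  -- the retraction
  set B : R →ₗ[F] A →ₗ[F] A := LinearMap.mk₂ F
    (fun f x => ε f • x + (((ρ f) (p x) : ↥L) : A) - ε f • ((p x : ↥L) : A))
    (by intro f g x; simp [map_add, add_smul]; try abel)
    (by intro c f x; simp [map_smul, smul_smul, smul_sub, smul_add, mul_comm]; try abel)
    (by intro f x y; simp [map_add, smul_add]; try abel)
    (by intro c f x; simp [map_smul, smul_smul, smul_sub, smul_add, smul_comm, mul_comm]; try abel)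
    with hB
  set π : R ⊗[F] A →ₗ[F] A := TensorProduct.lift B with hπ
  have hπt : ∀ (f : R) (x : A), π (f ⊗ₜ[F] x)
      = ε f • x + (((ρ f) (p x) : ↥L) : A) - ε f • ((p x : ↥L) : A) := by
    intro f x; simp [hπ, hB]
  have hπL : ∀ (f : R) (v : A) (hv : v ∈ L), π (f ⊗ₜ[F] v) = ((ρ f ⟨v, hv⟩ : ↥L) : A) := by
    intro f v hv
    rw [hπt, hpL v hv]
    abel
  have hπ1 : ∀ a : A, π ((1 : R) ⊗ₜ[F] a) = a := by
    intro a
    rw [hπt]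
    simp
  -- the combined bimodule lemma
  have hlr : ∀ (g : R) (c : ↥L) (x y : A) (hmem : x * (c : A) * y ∈ L),
      ((ρ g ⟨x * (c : A) * y, hmem⟩ : ↥L) : A) = x * ((ρ g c : ↥L) : A) * y := by
    intro g c x y hmem
    have e : (⟨x * (c : A) * y, hmem⟩ : ↥L)
        = ⟨x * (((⟨(c : A) * y, hmulr _ c.2 y⟩ : ↥L)) : A),
            hmull _ (hmulr _ c.2 y) x⟩ := Subtype.ext (mul_assoc _ _ _)
    rw [e, hl, hr, mul_assoc]
  -- the ideal we mod out by
  set S : Set (R ⊗[F] A) := {z : R ⊗[F] A |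
          ∃ (i : Fin n) (b : ↥L),
            z = (MvPolynomial.X i) ⊗ₜ[F] (b : A)
              - (1 : R) ⊗ₜ[F] ((ρ (MvPolynomial.X i) b : ↥L) : A)} with hS
  -- key: π kills x * g * y for generators g
  have key : ∀ g ∈ S, ∀ x y : R ⊗[F] A, π (x * g * y) = 0 := by
    rintro g ⟨i, c, rfl⟩ x y
    induction x using TensorProduct.induction_on with
    | zero => simp
    | add x₁ x₂ h₁ h₂ => rw [add_mul, add_mul, map_add, h₁, h₂, add_zero]
    | tmul f x₀ =>
      induction y using TensorProduct.induction_on with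
      | zero => simp
      | add y₁ y₂ h₁ h₂ => rw [mul_add, map_add, h₁, h₂, add_zero]
      | tmul h y₀ =>
        rw [mul_sub, sub_mul, map_sub]
        rw [Algebra.TensorProduct.tmul_mul_tmul, Algebra.TensorProduct.tmul_mul_tmul,
          Algebra.TensorProduct.tmul_mul_tmul, Algebra.TensorProduct.tmul_mul_tmul]
        have m1 : x₀ * (c : A) * y₀ ∈ L := hmulr _ (hmull _ c.2 x₀) y₀
        have m2 : x₀ * ((ρ (MvPolynomial.X i) c : ↥L) : A) * y₀ ∈ L :=
          hmulr _ (hmull _ (ρ (MvPolynomial.X i) c).2 x₀) y₀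
        rw [hπL _ _ m1, hπL _ _ m2, hlr, hlr]
        have e2 : ρ (f * 1 * h) (ρ (MvPolynomial.X i) c) = ρ (f * MvPolynomial.X i * h) c := by
          rw [← Module.End.mul_apply, ← map_mul]
          congr 1
          ring
        rw [e2, sub_self]
  -- the two-sided ideal of elements killed this way
  set K : TwoSidedIdeal (R ⊗[F] A) := TwoSidedIdeal.mk'
    {z | ∀ x y : R ⊗[F] A, π (x * z * y) = 0}
    (by intro x y; simp)
    (by intro a b ha hb x y; rw [mul_add, add_mul, map_add, ha, hb, add_zero])
    (by intro a ha x y; rw [show x * -a * y = -(x * a * y) by rw [← neg_one_zsmul a]; simp only [smul_mul_assoc, mul_smul_comm]; rw [neg_one_zsmul], map_neg, ha, neg_zero])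
    (by intro a b hb x y; rw [show x * (a * b) * y = (x * a) * b * y by noncomm_ring]; exact hb _ _)
    (by intro a b ha x y; rw [show x * (a * b) * y = x * a * (b * y) by noncomm_ring]; exact ha _ _)
    with hK
  have hSK : S ⊆ K := by
    intro g hg
    simp only [SetLike.mem_coe, hK, TwoSidedIdeal.mem_mk']
    exact key g hg
  have hkill : ∀ z ∈ TwoSidedIdeal.span S, π z = 0 := by
    intro z hz
    rw [TwoSidedIdeal.mem_span_iff] at hz
    have := hz K hSK
    rw [hK, TwoSidedIdeal.mem_mk'] at this
    simpa using this 1 1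
  -- conclude
  intro a b hab
  simp only at hab
  have hrel := Quotient.exact' hab
  rw [show (TwoSidedIdeal.span S).ringCon.toSetoid.r = (TwoSidedIdeal.span S).ringCon.r from rfl]
      at hrel
  have hmem : (1 : R) ⊗ₜ[F] a - (1 : R) ⊗ₜ[F] b ∈ TwoSidedIdeal.span S :=
    ((TwoSidedIdeal.span S).rel_iff _ _).1 hrel
  have := hkill _ hmem
  rw [map_sub, hπ1, hπ1] at this
  exact sub_eq_zero.1 this
end

section
/- Let A be a finite-dimensional F-algebra with Kemer index Ind(A) = (α, s) and parameter Par(A) = (d(A), n_A − 1), where d(A) = dim_F Ā and n_A is the nilpotency index of J(A). Then Ind(A) ≤ Par(A) in the lexicographic order. -/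
noncomputable section

open FreeAlgebra

variable (F : Type) [Field F]

/-- The monomials (words) appearing in an element of the free algebra F⟨x₀,x₁,…⟩. -/
def supportWords (f : FreeAlgebra F ℕ) : Finset (FreeMonoid ℕ) :=
  ((FreeAlgebra.equivMonoidAlgebraFreeMonoid (R := F) (X := ℕ)) f).coeff.support

/-- `f` is multilinear on the set of variables `s`: each variable of `s` occurs exactly once
in every monomial of `f`. -/
def MultilinearOn (s : Finset ℕ) (f : FreeAlgebra F ℕ) : Prop :=
  ∀ w ∈ supportWords F f, ∀ i ∈ s, (FreeMonoid.toList w).count i = 1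

/-- `f` is a multilinear polynomial: no variable is repeated in a monomial of `f`, and all
monomials of `f` involve the same set of variables. -/
def IsMultilinear (f : FreeAlgebra F ℕ) : Prop :=
  (∀ w ∈ supportWords F f, (FreeMonoid.toList w).Nodup) ∧
  (∀ w ∈ supportWords F f, ∀ w' ∈ supportWords F f,
    (FreeMonoid.toList w).toFinset = (FreeMonoid.toList w').toFinset)

/-- Substitution (the endomorphism of the free algebra sending the variable `k` to `σ k`). -/
def subst (σ : ℕ → FreeAlgebra F ℕ) : FreeAlgebra F ℕ →ₐ[F] FreeAlgebra F ℕ :=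
  FreeAlgebra.lift F σ

/-- The substitution identifying the variable `j` with the variable `i`. -/
def identVar (i j : ℕ) : FreeAlgebra F ℕ →ₐ[F] FreeAlgebra F ℕ :=
  subst F (fun k => if k = j then FreeAlgebra.ι F i else FreeAlgebra.ι F k)

/-- `f` is alternating on the set of variables `s`: it is multilinear on `s` and vanishes
whenever two distinct variables of `s` are identified (equivalently, whenever two variables
of `s` receive equal values). -/
def AltOn (s : Finset ℕ) (f : FreeAlgebra F ℕ) : Prop :=
  MultilinearOn F s f ∧ ∀ i ∈ s, ∀ j ∈ s, i ≠ j → identVar F i j f = 0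

/-- Outside `Γ` there is a multilinear polynomial with `ν` disjoint alternating sets of
cardinality `r` ("small sets") and `j` further disjoint alternating sets of cardinality
`r + 1` ("big sets"). -/
def HasConfig (Γ : Set (FreeAlgebra F ℕ)) (ν r j : ℕ) : Prop :=
  ∃ f ∉ Γ, IsMultilinear F f ∧
    ∃ (S : Fin ν → Finset ℕ) (T : Fin j → Finset ℕ),
      (∀ a b, a ≠ b → Disjoint (S a) (S b)) ∧
      (∀ a b, a ≠ b → Disjoint (T a) (T b)) ∧
      (∀ a b, Disjoint (S a) (T b)) ∧
      (∀ a, (S a).card = r ∧ AltOn F (S a) f) ∧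
      (∀ b, (T b).card = r + 1 ∧ AltOn F (T b) f)

/-- `Γ` has Kemer index `(d, s)`: `d` is the largest integer such that for every `ν` some
multilinear polynomial outside `Γ` has `ν` disjoint alternating sets of cardinality `d`, and
`s` is the largest integer such that for every `ν` some multilinear polynomial outside `Γ`
has `ν` disjoint alternating sets of cardinality `d` together with `s` further disjoint
alternating sets of cardinality `d + 1`. -/
def KemerIndex (Γ : Set (FreeAlgebra F ℕ)) (d s : ℕ) : Prop :=
  (∀ ν, HasConfig F Γ ν d 0) ∧ ¬ (∀ ν, HasConfig F Γ ν (d + 1) 0) ∧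
  (∀ ν, HasConfig F Γ ν d s) ∧ ¬ (∀ ν, HasConfig F Γ ν d (s + 1))

/-- The T-ideal of identities of the (unital) F-algebra W. -/
def IdSet (W : Type) [Ring W] [Algebra F W] : Set (FreeAlgebra F ℕ) :=
  {f | ∀ φ : FreeAlgebra F ℕ →ₐ[F] W, φ f = 0}

end

/-!
Let `f` be a multilinear polynomial with `n_A` disjoint alternating sets of more than
`d(A) = dim Ā` variables. Write each value of an evaluation as `a = ā + r` with `ā ∈ Ā` and
`r ∈ J(A)` and expand by multilinearity. A term in which one alternating set receives only values
in `Ā` vanishes, being alternating in more than `dim Ā` vectors; in every other term each monomial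
contains at least `n_A` factors from `J(A)` and vanishes since `J(A)^{n_A} = 0`. So `f` is an
identity of `A`. Applied to the small sets this gives `α ≤ d(A)`, and, when `α = d(A)`, applied
to the big sets it gives `s < n_A`.
-/

namespace List

variable {A : Type*} [Ring A]

/-- A factor outside `J` is absorbed into the next `J`-factor on its right, so only the left
ideal property is needed. -/
theorem exists_prod_eq_mul_of_countP (J : Ideal A) [DecidablePred (· ∈ J)] (l : List A) :
    ∃ (m : List A) (t : A),
      (∀ x ∈ m, x ∈ J) ∧ m.length = l.countP (· ∈ J) ∧ l.prod = m.prod * t := by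
  induction l with
  | nil => exact ⟨[], 1, by simp, by simp, by simp⟩
  | cons x l ih =>
    obtain ⟨m, t, hmJ, hlen, hprod⟩ := ih
    by_cases hx : x ∈ J
    · refine ⟨x :: m, t, ?_, by simp [hx, hlen], ?_⟩
      · simpa [hx] using hmJ
      · simp [hprod, mul_assoc]
    · rcases m with _ | ⟨y, m⟩
      · exact ⟨[], x * t, by simp, by simp [hx, hlen], by simp [hprod]⟩
      · refine ⟨x * y :: m, t, ?_, by simpa [hx] using hlen, ?_⟩
        · simp only [mem_cons, forall_eq_or_imp] at hmJ ⊢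
          exact ⟨J.mul_mem_left x hmJ.1, hmJ.2⟩
        · simp [hprod, mul_assoc]

theorem prod_eq_zero_of_le_countP {J : Ideal A} [DecidablePred (· ∈ J)] {n : ℕ}
    (hnil : ∀ m : List A, (∀ x ∈ m, x ∈ J) → m.length = n → m.prod = 0)
    {l : List A} (hl : n ≤ l.countP (· ∈ J)) : l.prod = 0 := by
  obtain ⟨m, t, hmJ, hlen, hprod⟩ := exists_prod_eq_mul_of_countP J l
  have hhead : (m.take n).prod = 0 :=
    hnil _ (fun x hx => hmJ x (mem_of_mem_take hx)) (by simp [hlen, hl])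
  rw [hprod, ← take_append_drop n m, prod_append, hhead, zero_mul, zero_mul]

end List

theorem FreeMonoid.exists_lift_update_eq_mul {α M : Type*} [DecidableEq α] [Monoid M]
    (a : α → M) {i : α} {w : FreeMonoid α} (hw : w.toList.count i = 1) :
    ∃ P Q : M, ∀ z, FreeMonoid.lift (Function.update a i z) w = P * z * Q := by
  have hi : i ∈ w.toList := List.count_pos_iff.mp (by omega)
  obtain ⟨l₁, l₂, hl⟩ := List.append_of_mem hi
  rw [hl, List.count_append, List.count_cons_self] at hw
  have hout : ∀ l : List α, l.count i = 0 → ∀ z, l.map (Function.update a i z) = l.map a :=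
    fun l hl z => List.map_congr_left fun b hb =>
      Function.update_of_ne (by rintro rfl; exact List.count_eq_zero.mp hl hb) _ _
  refine ⟨(l₁.map a).prod, (l₂.map a).prod, fun z => ?_⟩
  rw [FreeMonoid.lift_apply, hl, List.map_append, List.map_cons, hout l₁ (by omega) z,
    hout l₂ (by omega) z, List.prod_append, List.prod_cons, Function.update_self, mul_assoc]

theorem eq_zero_of_forall_mem_union {ι M N : Type*} [DecidableEq ι] [Add M] [AddZeroClass N]
    {Φ : (ι → M) → N} {T : Finset ι}
    (hadd : ∀ i ∈ T, ∀ a x y, Φ (Function.update a i (x + y)) =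
      Φ (Function.update a i x) + Φ (Function.update a i y))
    {P Q : Set M} {a : ι → M} (ha : ∀ i ∈ T, ∃ x ∈ P, ∃ y ∈ Q, a i = x + y)
    (h : ∀ a' : ι → M, (∀ i ∉ T, a' i = a i) → (∀ i ∈ T, a' i ∈ P ∪ Q) → Φ a' = 0) :
    Φ a = 0 := by
  induction T using Finset.induction_on generalizing a with
  | empty => exact h a (fun _ _ => rfl) (by simp)
  | insert j T hj ih =>
    obtain ⟨x, hx, y, hy, hxy⟩ := ha j (Finset.mem_insert_self j T)
    have hpart : ∀ z ∈ P ∪ Q, Φ (Function.update a j z) = 0 := by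
      intro z hz
      refine ih (fun i hi => hadd i (Finset.mem_insert_of_mem hi)) (fun i hi => ?_)
        (fun a' hout hin => h a' (fun i hi => ?_) (fun i hi => ?_))
      · rw [Function.update_of_ne (ne_of_mem_of_not_mem hi hj)]
        exact ha i (Finset.mem_insert_of_mem hi)
      · rw [hout i (fun hiT => hi (Finset.mem_insert_of_mem hiT)),
          Function.update_of_ne (by rintro rfl; exact hi (Finset.mem_insert_self _ T))]
      · rcases Finset.mem_insert.mp hi with rfl | hiT
        · rwa [hout i hj, Function.update_self]
        · exact hin i hiT
    rw [← Function.update_eq_self j a, hxy, hadd j (Finset.mem_insert_self j T),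
      hpart x (Or.inl hx), hpart y (Or.inr hy), add_zero]

def Finset.extendOn {α M : Type*} [DecidableEq α] (T : Finset α) (v : T → M) (a : α → M) :
    α → M :=
  fun n => if h : n ∈ T then v ⟨n, h⟩ else a n

theorem Finset.extendOn_update {α M : Type*} [DecidableEq α] (T : Finset α) [DecidableEq T]
    (v : T → M) (a : α → M) (i : T) (x : M) :
    T.extendOn (Function.update v i x) a = Function.update (T.extendOn v a) i x := by
  ext n
  by_cases hn : n ∈ T
  · by_cases hni : n = i
    · subst hni; simp [Finset.extendOn]
    · have hni' : (⟨n, hn⟩ : T) ≠ i := fun h => hni (congrArg Subtype.val h)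
      simp [Finset.extendOn, hn, hni, Function.update_of_ne hni']
  · have hni : n ≠ i := fun h => hn (h ▸ i.2)
    simp [Finset.extendOn, hn, hni]

theorem Finset.extendOn_restrict {α M : Type*} [DecidableEq α] (T : Finset α) (a : α → M) :
    T.extendOn (fun i => a i) a = a := by
  ext n
  by_cases hn : n ∈ T <;> simp [Finset.extendOn, hn]

namespace FreeAlgebra

variable {F : Type} [Field F] {A : Type*} [Ring A] [Algebra F A]

theorem lift_apply_eq_sum_supportWords (a : ℕ → A) (f : FreeAlgebra F ℕ) :
    lift F a f = ∑ w ∈ supportWords F f,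
      (equivMonoidAlgebraFreeMonoid f).coeff w • FreeMonoid.lift a w := by
  have hcomp : (MonoidAlgebra.lift F A (FreeMonoid ℕ) (FreeMonoid.lift a)).comp
      (equivMonoidAlgebraFreeMonoid : FreeAlgebra F ℕ ≃ₐ[F] _).toAlgHom = lift F a := by
    ext n
    simp [equivMonoidAlgebraFreeMonoid]
  rw [← hcomp, AlgHom.comp_apply, MonoidAlgebra.lift_apply, Finsupp.sum]
  rfl

section Multilinear

variable {T : Finset ℕ} {f : FreeAlgebra F ℕ}

theorem lift_update_add (hf : MultilinearOn F T f) {i : ℕ} (hi : i ∈ T) (a : ℕ → A) (x y : A) :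
    lift F (Function.update a i (x + y)) f =
      lift F (Function.update a i x) f + lift F (Function.update a i y) f := by
  simp only [lift_apply_eq_sum_supportWords, ← Finset.sum_add_distrib]
  refine Finset.sum_congr rfl fun w hw => ?_
  obtain ⟨P, Q, hPQ⟩ := FreeMonoid.exists_lift_update_eq_mul a (hf w hw i hi)
  rw [hPQ, hPQ, hPQ, mul_add, add_mul, smul_add]

theorem lift_update_smul (hf : MultilinearOn F T f) {i : ℕ} (hi : i ∈ T) (a : ℕ → A) (c : F)
    (x : A) : lift F (Function.update a i (c • x)) f = c • lift F (Function.update a i x) f := by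
  simp only [lift_apply_eq_sum_supportWords, Finset.smul_sum]
  refine Finset.sum_congr rfl fun w hw => ?_
  obtain ⟨P, Q, hPQ⟩ := FreeMonoid.exists_lift_update_eq_mul a (hf w hw i hi)
  rw [hPQ, hPQ, mul_smul_comm, smul_mul_assoc, smul_comm]

end Multilinear

theorem lift_identVar (a : ℕ → A) (i j : ℕ) (f : FreeAlgebra F ℕ) :
    lift F a (identVar F i j f) = lift F (Function.update a j (a i)) f := by
  rw [← AlgHom.comp_apply]
  congr 2
  ext k
  by_cases hk : k = j
  · subst hk; simp [identVar, subst]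
  · simp [identVar, subst, hk]

end FreeAlgebra

namespace AltOn

open FreeAlgebra

variable {F : Type} [Field F] {A : Type*} [Ring A] [Algebra F A] {T : Finset ℕ}
  {f : FreeAlgebra F ℕ}

theorem lift_eq_zero_of_eq (hf : AltOn F T f) {a : ℕ → A} {i j : ℕ} (hi : i ∈ T) (hj : j ∈ T)
    (hij : i ≠ j) (ha : a i = a j) : lift F a f = 0 := by
  have ha' : Function.update a j (a i) = a := by rw [ha, Function.update_eq_self]
  rw [← ha', ← lift_identVar, hf.2 i hi j hj hij, map_zero]

def alternatingMap (hf : AltOn F T f) (a : ℕ → A) : A [⋀^T]→ₗ[F] A where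
  toFun v := lift F (T.extendOn v a) f
  map_update_add' v i x y := by
    simp only [T.extendOn_update]
    exact lift_update_add hf.1 i.2 _ x y
  map_update_smul' v i c x := by
    simp only [T.extendOn_update]
    exact lift_update_smul hf.1 i.2 _ c x
  map_eq_zero_of_eq' v i j hv hij :=
    hf.lift_eq_zero_of_eq i.2 j.2 (Subtype.coe_ne_coe.mpr hij) (by simpa [Finset.extendOn])

theorem lift_eq_zero_of_not_linearIndependent (hf : AltOn F T f) {a : ℕ → A}
    (ha : ¬ LinearIndependent F (fun i : T => a i)) : lift F a f = 0 := by
  have := (hf.alternatingMap a).map_linearDependent _ ha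
  rwa [alternatingMap, AlternatingMap.coe_mk, MultilinearMap.coe_mk, T.extendOn_restrict] at this

theorem lift_eq_zero_of_finrank_lt (hf : AltOn F T f) {V : Submodule F A} [FiniteDimensional F V]
    (hcard : Module.finrank F V < T.card) {a : ℕ → A} (ha : ∀ i ∈ T, a i ∈ V) :
    lift F a f = 0 := by
  refine hf.lift_eq_zero_of_not_linearIndependent fun hli => hcard.not_ge ?_
  have hV : LinearIndependent F (fun i : T => (⟨a i, ha i i.2⟩ : V)) :=
    LinearIndependent.of_comp V.subtype hli
  simpa using hV.fintype_card_le_finrank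

end AltOn

namespace FreeAlgebra

open Function

variable {F : Type} [Field F] {A : Type*} [Ring A] [Algebra F A] {f : FreeAlgebra F ℕ}
  {ι : Type*} [Fintype ι] {T : ι → Finset ℕ}

theorem lift_eq_zero_of_forall_exists_mem_ideal (hT : Pairwise (Disjoint on T))
    (hf : ∀ b, MultilinearOn F (T b) f) {J : Ideal A} {n : ℕ}
    (hnil : ∀ l : List A, (∀ x ∈ l, x ∈ J) → l.length = n → l.prod = 0)
    (hn : n ≤ Fintype.card ι) {a : ℕ → A} (ha : ∀ b, ∃ i ∈ T b, a i ∈ J) :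
    lift F a f = 0 := by
  classical
  choose g hgT hgJ using ha
  have hg : Function.Injective g := fun b c hbc => by
    by_contra hne
    exact Finset.disjoint_left.mp (hT hne) (hgT b) (hbc ▸ hgT c)
  rw [lift_apply_eq_sum_supportWords]
  refine Finset.sum_eq_zero fun w hw => ?_
  rw [FreeMonoid.lift_apply, List.prod_eq_zero_of_le_countP hnil, smul_zero]
  have himage : Finset.univ.image g ⊆ (w.toList.filter (fun i => a i ∈ J)).toFinset := by
    simp only [Finset.subset_iff, Finset.mem_image, Finset.mem_univ, true_and,
      List.mem_toFinset, List.mem_filter, decide_eq_true_eq, forall_exists_index,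
      forall_apply_eq_imp_iff]
    exact fun b => ⟨List.count_pos_iff.mp (by rw [hf b w hw _ (hgT b)]; omega), hgJ b⟩
  calc n ≤ (Finset.univ.image g).card := by
        rwa [Finset.card_image_of_injective _ hg, Finset.card_univ]
    _ ≤ (w.toList.filter (fun i => a i ∈ J)).length :=
        (Finset.card_le_card himage).trans (List.toFinset_card_le _)
    _ = _ := by rw [List.countP_map, List.countP_eq_length_filter]; rfl

/-- The blocks `b ∉ B` are those already known to contain a variable evaluated in `J`;
splitting the values on one further block either puts that block entirely into `V` or
gives it such a variable. -/
theorem lift_eq_zero_of_altOn (hT : Pairwise (Disjoint on T)) (hf : ∀ b, AltOn F (T b) f)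
    {V : Submodule F A} [FiniteDimensional F V] (hV : ∀ b, Module.finrank F V < (T b).card)
    {J : Ideal A} (hVJ : ∀ x : A, ∃ v ∈ V, ∃ r ∈ J, x = v + r) {n : ℕ}
    (hnil : ∀ l : List A, (∀ x ∈ l, x ∈ J) → l.length = n → l.prod = 0)
    (hn : n ≤ Fintype.card ι) (a : ℕ → A) : lift F a f = 0 := by
  classical
  suffices h : ∀ B : Finset ι, ∀ a : ℕ → A, (∀ b ∉ B, ∃ i ∈ T b, a i ∈ J) → lift F a f = 0 from
    h Finset.univ a (by simp)
  intro B
  induction B using Finset.induction_on with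
  | empty =>
    exact fun a ha => lift_eq_zero_of_forall_exists_mem_ideal hT (fun b => (hf b).1) hnil hn
      (fun b => ha b (Finset.notMem_empty b))
  | insert b B hb ih =>
    intro a ha
    refine eq_zero_of_forall_mem_union (Φ := fun a => lift F a f) (P := V) (Q := J)
      (fun i hi => lift_update_add (hf b).1 hi) (fun i _ => hVJ (a i)) fun a' hout hin => ?_
    by_cases hbJ : ∃ i ∈ T b, a' i ∈ J
    · refine ih a' fun c hc => ?_
      by_cases hcb : c = b
      · exact hcb ▸ hbJ
      · obtain ⟨i, hi, hiJ⟩ := ha c (by simp [hcb, hc])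
        have hib : i ∉ T b := Finset.disjoint_left.mp (hT hcb) hi
        exact ⟨i, hi, hout i hib ▸ hiJ⟩
    · push Not at hbJ
      exact (hf b).lift_eq_zero_of_finrank_lt (hV b)
        fun i hi => (hin i hi).resolve_right (hbJ i hi)

end FreeAlgebra

section Identities

open FreeAlgebra Function

variable {F : Type} [Field F] {A : Type} [Ring A] [Algebra F A] {V : Submodule F A}
  [FiniteDimensional F V] {J : Ideal A} {n : ℕ}

theorem mem_idSet_of_altOn {f : FreeAlgebra F ℕ} {ι : Type*} [Fintype ι] {T : ι → Finset ℕ}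
    (hT : Pairwise (Disjoint on T)) (hf : ∀ b, AltOn F (T b) f)
    (hV : ∀ b, Module.finrank F V < (T b).card) (hVJ : ∀ x : A, ∃ v ∈ V, ∃ r ∈ J, x = v + r)
    (hnil : ∀ l : List A, (∀ x ∈ l, x ∈ J) → l.length = n → l.prod = 0)
    (hn : n ≤ Fintype.card ι) : f ∈ IdSet F A := fun φ => by
  rw [← (lift F).apply_symm_apply φ]
  exact lift_eq_zero_of_altOn hT hf hV hVJ hnil hn _

theorem HasConfig.le_finrank {ν k j : ℕ} (h : HasConfig F (IdSet F A) ν k j)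
    (hVJ : ∀ x : A, ∃ v ∈ V, ∃ r ∈ J, x = v + r)
    (hnil : ∀ l : List A, (∀ x ∈ l, x ∈ J) → l.length = n → l.prod = 0) (hn : n ≤ ν) :
    k ≤ Module.finrank F V := by
  obtain ⟨f, hfΓ, -, S, -, hS, -, -, hSalt, -⟩ := h
  by_contra! hr
  exact hfΓ (mem_idSet_of_altOn (fun b c => hS b c) (fun b => (hSalt b).2)
    (fun b => (hSalt b).1 ▸ hr) hVJ hnil (by simpa using hn))

theorem HasConfig.lt_finrank {ν k j : ℕ} (h : HasConfig F (IdSet F A) ν k j)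
    (hVJ : ∀ x : A, ∃ v ∈ V, ∃ r ∈ J, x = v + r)
    (hnil : ∀ l : List A, (∀ x ∈ l, x ∈ J) → l.length = n → l.prod = 0) (hn : n ≤ j) :
    k < Module.finrank F V := by
  obtain ⟨f, hfΓ, -, -, T, -, hT, -, -, hTalt⟩ := h
  by_contra! hr
  exact hfΓ (mem_idSet_of_altOn (fun b c => hT b c) (fun b => (hTalt b).2)
    (fun b => (hTalt b).1 ▸ Nat.lt_succ_of_le hr) hVJ hnil (by simpa using hn))

end Identities

theorem stmt_17_general (F : Type) [Field F]
    (A : Type) [Ring A] [Algebra F A] [FiniteDimensional F A]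
    (S : Subalgebra F A)
    (hcompl : ∀ a : A, ∃ s ∈ S, ∃ r ∈ (⊥ : Ideal A).jacobson, a = s + r)
    (nA : ℕ)
    (hnil : ∀ l : List A, (∀ x ∈ l, x ∈ (⊥ : Ideal A).jacobson) → l.length = nA →
      l.prod = 0)
    (α s : ℕ) (hKemer : KemerIndex F (IdSet F A) α s) :
    toLex (α, s) ≤ toLex (Module.finrank F ↥S, nA - 1) := by
  obtain ⟨-, -, hconf, -⟩ := hKemer
  rw [← Subalgebra.finrank_toSubmodule, Prod.Lex.toLex_le_toLex]
  have hα : α ≤ Module.finrank F (Subalgebra.toSubmodule S) :=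
    (hconf nA).le_finrank hcompl hnil le_rfl
  rcases hα.lt_or_eq with hlt | rfl
  · exact Or.inl hlt
  · refine Or.inr ⟨rfl, ?_⟩
    by_contra! hs
    exact lt_irrefl _ ((hconf 0).lt_finrank hcompl hnil (by omega))

/-- Let A be a finite-dimensional F-algebra with Wedderburn–Malcev decomposition
A = Ā ⊕ J(A), Kemer index Ind(A) = (α, s) and parameter Par(A) = (d(A), n_A − 1), where
d(A) = dim_F Ā and n_A is the nilpotency index of J(A).  Then Ind(A) ≤ Par(A) in the
lexicographic order. -/
theorem stmt_17 (F : Type) [Field F] [CharZero F]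
    (A : Type) [Ring A] [Algebra F A] [FiniteDimensional F A]
    (S : Subalgebra F A) (hss : IsSemisimpleRing ↥S)
    (hcompl : ∀ a : A, ∃ s ∈ S, ∃ r ∈ (⊥ : Ideal A).jacobson, a = s + r)
    (hdisj : ∀ a ∈ S, a ∈ (⊥ : Ideal A).jacobson → a = 0)
    (nA : ℕ)
    (hnil : ∀ l : List A, (∀ x ∈ l, x ∈ (⊥ : Ideal A).jacobson) → l.length = nA →
      l.prod = 0)
    (hnA : ∃ l : List A, (∀ x ∈ l, x ∈ (⊥ : Ideal A).jacobson) ∧ l.length + 1 = nA ∧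
      l.prod ≠ 0)
    (α s : ℕ) (hKemer : KemerIndex F (IdSet F A) α s) :
    toLex (α, s) ≤ toLex (Module.finrank F ↥S, nA - 1) :=
  stmt_17_general F A S hcompl nA hnil α s hKemer
end

section
/- Let B be a finite-dimensional F-algebra with semisimple part B̄ and nilpotency index n_B of J(B). Let B' = B̄ * F{x₁,…,x_n} (polynomials in noncommuting variables with coefficients in B̄, n ≥ dim_F J(B)), I₁ the ideal of B' generated by all evaluations of Id(B) on B', I₂ the ideal generated by x₁,…,x_n, and B̂_u = B'/(I₁ + I₂^u). Then: (1) if u ≥ n_B then Id(B̂_u) = Id(B); (2) B̂_u is finite-dimensional over F; (3) the nilpotency index of J(B̂_u) is at most u. -/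
noncomputable section

variable (F : Type) [Field F]

/-- I₁: the ideal of B' generated by all evaluations on B' of the identities of B. -/
def Ione (B B' : Type) [Ring B] [Algebra F B] [Ring B'] [Algebra F B'] :
    TwoSidedIdeal B' :=
  TwoSidedIdeal.span {y | ∃ f ∈ IdSet F B, ∃ φ : FreeAlgebra F ℕ →ₐ[F] B', φ f = y}

/-- I₂ᵘ: the u-th power of the ideal I₂ generated by the variables x₁,…,xₙ. -/
def ItwoPow (B' : Type) [Ring B'] {n : ℕ} (X : Fin n → B') (u : ℕ) :
    TwoSidedIdeal B' :=
  TwoSidedIdeal.span {z | ∃ g : Fin u → B',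
    (∀ i, g i ∈ TwoSidedIdeal.span (Set.range X)) ∧ z = (List.ofFn g).prod}

/-- B̂_u = B'/(I₁ + I₂ᵘ). -/
abbrev Bhat (B B' : Type) [Ring B] [Algebra F B] [Ring B'] [Algebra F B'] {n : ℕ}
    (X : Fin n → B') (u : ℕ) : Type :=
  (Ione F B B' ⊔ ItwoPow B' X u).ringCon.Quotient

end

/-!
Write π : B' → B̂_u for the quotient map and M, V for the spans of ι(B̄) and of the xᵢ.

Finite dimension: B' is spanned by the words in M and V, and those containing at least u
letters from V lie in I₂ᵘ; so B̂_u is the image of the finite-dimensional space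
∑_{k<u} (MV)ᵏM.

Identities: sending B̄ identically and the xᵢ onto a spanning set of J(B) defines a surjection
B' → B. It kills I₁, because it turns evaluations of identities of B on B' into evaluations on
B, and it kills I₂ᵘ when u ≥ n_B, as J(B)^{n_B} = 0. So B is a quotient of B̂_u, and
Id(B̂_u) ⊆ Id(B). The other inclusion holds because every evaluation on B̂_u lifts to B', where
identities of B evaluate into I₁.

Radical: the xᵢ vanish in B'/(I₁ + I₂ᵘ + I₂), so it is a quotient of B̄ and therefore
semisimple. Hence J(B̂_u) lies in the kernel π(I₂) of the map from B̂_u onto it, and a product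
of u elements of π(I₂) lies in π(I₂ᵘ) = 0.
-/

open Function Set Submodule

namespace TwoSidedIdeal

variable {R A C : Type*} [CommSemiring R] [Ring A] [Algebra R A] [Ring C] [Algebra R C]

@[simp]
lemma ker_ringCon_mkₐ (I : TwoSidedIdeal A) : ker (I.ringCon.mkₐ R) = I :=
  ker_ringCon_mk' I

variable (R) in
lemma ringCon_mkₐ_eq_zero_iff (I : TwoSidedIdeal A) {x : A} :
    I.ringCon.mkₐ R x = 0 ↔ x ∈ I := by
  rw [← mem_ker, ker_ringCon_mkₐ]

def liftₐ (I : TwoSidedIdeal A) (f : A →ₐ[R] C) (h : I ≤ ker f) : I.ringCon.Quotient →ₐ[R] C :=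
  I.ringCon.liftₐ f fun x y hxy => by
    have := h ((I.rel_iff x y).1 hxy)
    rwa [mem_ker, map_sub, sub_eq_zero] at this

@[simp]
lemma liftₐ_mkₐ (I : TwoSidedIdeal A) (f : A →ₐ[R] C) (h : I ≤ ker f) (x : A) :
    I.liftₐ f h (I.ringCon.mkₐ R x) = f x :=
  rfl

lemma liftₐ_surjective (I : TwoSidedIdeal A) {f : A →ₐ[R] C} (hf : Surjective f)
    (h : I ≤ ker f) : Surjective (I.liftₐ f h) := fun c => by
  obtain ⟨x, rfl⟩ := hf c
  exact ⟨_, liftₐ_mkₐ I f h x⟩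

variable (R) in
def restrictScalars (I : TwoSidedIdeal A) : Submodule R A :=
  I.asIdeal.restrictScalars R

@[simp]
lemma mem_restrictScalars {I : TwoSidedIdeal A} {x : A} : x ∈ I.restrictScalars R ↔ x ∈ I := by
  simp [restrictScalars]

lemma restrictScalars_mul_le (I : TwoSidedIdeal A) (P : Submodule R A) :
    I.restrictScalars R * P ≤ I.restrictScalars R :=
  mul_le.2 fun _ hi _ _ => mem_restrictScalars.2 (I.mul_mem_right _ _ (mem_restrictScalars.1 hi))

lemma mul_restrictScalars_le (I : TwoSidedIdeal A) (P : Submodule R A) :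
    P * I.restrictScalars R ≤ I.restrictScalars R :=
  mul_le.2 fun _ _ _ hi => mem_restrictScalars.2 (I.mul_mem_left _ _ (mem_restrictScalars.1 hi))

end TwoSidedIdeal

lemma FreeAlgebra.exists_comp_eq_of_surjective {R X A C : Type*} [CommSemiring R] [Semiring A]
    [Algebra R A] [Semiring C] [Algebra R C] {φ : A →ₐ[R] C} (hφ : Surjective φ)
    (ψ : FreeAlgebra R X →ₐ[R] C) : ∃ χ : FreeAlgebra R X →ₐ[R] A, φ.comp χ = ψ :=
  ⟨lift R (surjInv hφ ∘ ψ ∘ ι R), hom_ext <| funext fun x => by simp [surjInv_eq hφ]⟩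

lemma Algebra.adjoin_toSubmodule_le_of_mul_mem {R A : Type*} [CommSemiring R] [Semiring A]
    [Algebra R A] {s : Set A} {W : Submodule R A} (h1 : 1 ∈ W)
    (hmul : ∀ w ∈ W, ∀ x ∈ s, w * x ∈ W) : Subalgebra.toSubmodule (adjoin R s) ≤ W := by
  rw [adjoin_eq_span, span_le]
  intro x hx
  exact Submonoid.closure_induction_right h1 (fun w _ x hx hw => hmul w hw x hx) hx

lemma Ideal.jacobson_bot_le_ker {R S : Type*} [Ring R] [Ring S] [IsSemisimpleRing S]
    {f : R →+* S} (hf : Surjective f) : (⊥ : Ideal R).jacobson ≤ RingHom.ker f := by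
  calc (⊥ : Ideal R).jacobson ≤ (Ideal.comap f ⊥).jacobson := Ideal.jacobson_mono bot_le
    _ = Ideal.comap f (⊥ : Ideal S).jacobson := (Ideal.comap_jacobson_of_surjective hf).symm
    _ = RingHom.ker f := by
      rw [Ideal.jacobson_bot, IsSemisimpleRing.jacobson_eq_bot, RingHom.ker_eq_comap_bot]

lemma Submodule.exists_fin_span_range_eq {K V : Type*} [DivisionRing K] [AddCommGroup V]
    [Module K V] (W : Submodule K V) [FiniteDimensional K W] {n : ℕ}
    (hn : Module.finrank K W ≤ n) : ∃ r : Fin n → V, span K (range r) = W := by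
  let b := Module.finBasis K W
  refine ⟨fun i => if h : (i : ℕ) < Module.finrank K W then b ⟨i, h⟩ else 0, le_antisymm ?_ ?_⟩
  · rw [span_le]
    rintro _ ⟨i, rfl⟩
    dsimp only
    split_ifs
    exacts [(b _).2, zero_mem W]
  · calc W = (span K (range b)).map W.subtype := by
          rw [b.span_eq, map_top, range_subtype]
      _ = span K (range (W.subtype ∘ b)) := by rw [map_span, range_comp]
      _ ≤ _ := span_mono <| by
          rintro _ ⟨j, rfl⟩
          exact ⟨⟨j, j.2.trans_le hn⟩, by simp [j.2]⟩

theorem Submodule.mem_iSup_pow_mul_sup {R A : Type*} [CommSemiring R] [Semiring A]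
    [Algebra R A] {M V P : Submodule R A} (h1M : 1 ∈ M) (hMM : M * M ≤ M)
    (hgen : Algebra.adjoin R (M ∪ V : Set A) = ⊤) (hPM : P * M ≤ P) (hPV : P * V ≤ P) {u : ℕ}
    (hu : (M * V) ^ u * M ≤ P) (a : A) : a ∈ (⨆ k : Fin u, (M * V) ^ (k : ℕ) * M) ⊔ P := by
  set W : ℕ → Submodule R A := fun k => (M * V) ^ k * M
  set N := ⨆ k : Fin u, W k
  have hWM (k : ℕ) : W k * M ≤ W k := by
    simpa only [W, mul_assoc] using mul_le_mul_right hMM ((M * V) ^ k)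
  have hWV (k : ℕ) : W k * V ≤ W (k + 1) :=
    calc W k * V = (M * V) ^ (k + 1) * 1 := by simp only [W, pow_succ, mul_assoc, mul_one]
      _ ≤ W (k + 1) := mul_le_mul_right (one_le.2 h1M) _
  have hWN (k : ℕ) (hk : k ≤ u) : W k ≤ N ⊔ P := by
    rcases hk.lt_or_eq with hk | rfl
    · exact le_sup_of_le_left (le_iSup (fun k : Fin u => W k) ⟨k, hk⟩)
    · exact le_sup_of_le_right hu
  have hmul (Q : Submodule R A) (hPQ : P * Q ≤ P) (hWQ : ∀ k : Fin u, W k * Q ≤ N ⊔ P) :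
      (N ⊔ P) * Q ≤ N ⊔ P := by
    rw [Submodule.sup_mul, Submodule.iSup_mul]
    exact sup_le (iSup_le hWQ) (le_sup_of_le_right hPQ)
  refine Algebra.adjoin_toSubmodule_le_of_mul_mem ?_ ?_ (hgen ▸ Algebra.mem_top : a ∈ _)
  · exact hWN 0 u.zero_le (by simpa [W] using h1M)
  rintro w hw x (hx | hx)
  · exact hmul M hPM (fun k => (hWM k).trans (hWN k k.2.le)) (mul_mem_mul hw hx)
  · exact hmul V hPV (fun k => (hWV k).trans (hWN (k + 1) k.2)) (mul_mem_mul hw hx)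

lemma List.prod_eq_zero_of_length_le {M₀ : Type*} [MonoidWithZero M₀] {p : M₀ → Prop} {m k : ℕ}
    (h : ∀ l : List M₀, (∀ x ∈ l, p x) → l.length = m → l.prod = 0) (hmk : m ≤ k)
    (l : List M₀) (hl : ∀ x ∈ l, p x) (hlen : l.length = k) : l.prod = 0 := by
  rw [← List.prod_take_mul_prod_drop l m,
    h _ (fun x hx => hl x (List.take_subset _ _ hx)) (by simp [hlen, hmk]), zero_mul]

section Identities

variable {F : Type} [Field F]

lemma IdSet_subset_of_surjective {A C : Type} [Ring A] [Algebra F A] [Ring C] [Algebra F C]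
    {φ : A →ₐ[F] C} (hφ : Surjective φ) : IdSet F A ⊆ IdSet F C := by
  intro f hf ψ
  obtain ⟨χ, rfl⟩ := FreeAlgebra.exists_comp_eq_of_surjective hφ ψ
  simp [hf χ]

variable {B B' : Type} [Ring B] [Algebra F B] [Ring B'] [Algebra F B'] {n : ℕ} {X : Fin n → B'}
  {u : ℕ}

lemma Ione_le_ker (θ : B' →ₐ[F] B) : Ione F B B' ≤ TwoSidedIdeal.ker θ := by
  rw [Ione, TwoSidedIdeal.span_le]
  rintro _ ⟨f, hf, φ, rfl⟩
  exact (TwoSidedIdeal.mem_ker _).2 (hf (θ.comp φ))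

lemma IdSet_subset_IdSet_Bhat : IdSet F B ⊆ IdSet F (Bhat F B B' X u) := by
  intro f hf ψ
  obtain ⟨χ, rfl⟩ := FreeAlgebra.exists_comp_eq_of_surjective
    (RingCon.mkₐ_surjective (α := F) (Ione F B B' ⊔ ItwoPow B' X u).ringCon) ψ
  exact (TwoSidedIdeal.ringCon_mkₐ_eq_zero_iff F _).2
    (TwoSidedIdeal.mem_sup_left (TwoSidedIdeal.subset_span ⟨f, hf, χ, rfl⟩))

lemma ItwoPow_le_ker {C : Type} [Ring C] [Algebra F C] (θ : B' →ₐ[F] C) {J : Ideal C}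
    [J.IsTwoSided] (hX : ∀ i, θ (X i) ∈ J)
    (hJ : ∀ l : List C, (∀ x ∈ l, x ∈ J) → l.length = u → l.prod = 0) :
    ItwoPow B' X u ≤ TwoSidedIdeal.ker θ := by
  have hI₂ : TwoSidedIdeal.span (range X) ≤ J.toTwoSided.comap θ :=
    TwoSidedIdeal.span_le.2 <| by
      rintro _ ⟨i, rfl⟩
      exact (TwoSidedIdeal.mem_comap θ).2 (Ideal.mem_toTwoSided.2 (hX i))
  rw [ItwoPow, TwoSidedIdeal.span_le]
  rintro _ ⟨g, hg, rfl⟩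
  rw [SetLike.mem_coe, TwoSidedIdeal.mem_ker, map_list_prod, List.map_ofFn]
  refine hJ _ ?_ (List.length_ofFn ..)
  simpa using fun i => Ideal.mem_toTwoSided.1 ((TwoSidedIdeal.mem_comap θ).1 (hI₂ (hg i)))

lemma IdSet_Bhat_eq_of_surjective {θ : B' →ₐ[F] B} (hθ : Surjective θ)
    (hθX : ItwoPow B' X u ≤ TwoSidedIdeal.ker θ) : IdSet F (Bhat F B B' X u) = IdSet F B :=
  (IdSet_subset_of_surjective (TwoSidedIdeal.liftₐ_surjective _ hθ
    (sup_le (Ione_le_ker θ) hθX))).antisymm IdSet_subset_IdSet_Bhat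

end Identities

section FreeProduct

variable {F : Type} [Field F] {S B' : Type} [Ring S] [Algebra F S] [Ring B'] [Algebra F B']
  {n : ℕ} {ιS : S →ₐ[F] B'} {X : Fin n → B'}

lemma adjoin_range_union_range_eq_top
    (huniv : ∀ (C : Type) [Ring C] [Algebra F C] (g : S →ₐ[F] C) (y : Fin n → C),
      ∃! φ : B' →ₐ[F] C, (∀ s, φ (ιS s) = g s) ∧ ∀ i, φ (X i) = y i) :
    Algebra.adjoin F (range ιS ∪ range X) = ⊤ := by
  set A := Algebra.adjoin F (range ιS ∪ range X)
  obtain ⟨φ, ⟨hφS, hφX⟩, -⟩ := huniv A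
    (ιS.codRestrict A fun s => Algebra.subset_adjoin (Or.inl ⟨s, rfl⟩))
    fun i => ⟨X i, Algebra.subset_adjoin (Or.inr ⟨i, rfl⟩)⟩
  have hid : A.val.comp φ = AlgHom.id F B' := (huniv B' ιS X).unique
    ⟨fun s => congrArg Subtype.val (hφS s), fun i => congrArg Subtype.val (hφX i)⟩
    ⟨fun _ => rfl, fun _ => rfl⟩
  refine eq_top_iff.2 fun b _ => ?_
  rw [← AlgHom.id_apply (R := F) b, ← hid]
  exact (φ b).2

lemma pow_le_ItwoPow {P : Submodule F B'}
    (hP : P ≤ (TwoSidedIdeal.span (range X)).restrictScalars F) (k : ℕ) :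
    P ^ k ≤ (ItwoPow B' X k).restrictScalars F := by
  rw [pow_eq_span_pow_set, span_le]
  intro a ha
  obtain ⟨f, rfl⟩ := Set.mem_pow.1 ha
  exact TwoSidedIdeal.mem_restrictScalars.2 <| TwoSidedIdeal.subset_span
    ⟨fun i => f i, fun i => TwoSidedIdeal.mem_restrictScalars.1 (hP (f i).2), rfl⟩

variable (hgen : Algebra.adjoin F (range ιS ∪ range X) = ⊤)
include hgen

lemma surjective_comp_of_map_eq_zero {C : Type} [Ring C] [Algebra F C] {φ : B' →ₐ[F] C}
    (hφ : Surjective φ) (hX : ∀ i, φ (X i) = 0) : Surjective (φ.comp ιS) := by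
  intro c
  have hc : c ∈ (Algebra.adjoin F (range ιS ∪ range X)).map φ := by
    rw [hgen, Algebra.map_top]
    exact hφ c
  rw [AlgHom.map_adjoin] at hc
  refine (Algebra.adjoin_le ?_ : _ ≤ (φ.comp ιS).range) hc
  rintro _ ⟨b, ⟨s, rfl⟩ | ⟨i, rfl⟩, rfl⟩
  · exact ⟨s, rfl⟩
  · rw [hX]
    exact zero_mem _

theorem finite_quotient_of_ItwoPow_le [Module.Finite F S] {u : ℕ} {I : TwoSidedIdeal B'}
    (hI : ItwoPow B' X u ≤ I) : Module.Finite F I.ringCon.Quotient := by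
  set M := Subalgebra.toSubmodule ιS.range
  set V := span F (range X)
  set N := ⨆ k : Fin u, (M * V) ^ (k : ℕ) * M
  have hMfg : M.FG :=
    Module.Finite.iff_fg.1 (inferInstanceAs (Module.Finite F (LinearMap.range ιS.toLinearMap)))
  have hV : V ≤ (TwoSidedIdeal.span (range X)).restrictScalars F :=
    span_le.2 fun _ hx => TwoSidedIdeal.mem_restrictScalars.2 (TwoSidedIdeal.subset_span hx)
  have hMVu : (M * V) ^ u * M ≤ I.restrictScalars F :=
    calc (M * V) ^ u * M ≤ (ItwoPow B' X u).restrictScalars F * M :=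
          mul_le_mul_left (pow_le_ItwoPow ((mul_le_mul_right hV M).trans
            (TwoSidedIdeal.mul_restrictScalars_le _ _)) u) M
      _ ≤ I.restrictScalars F * M := mul_le_mul_left (fun _ hx =>
          TwoSidedIdeal.mem_restrictScalars.2 (hI (TwoSidedIdeal.mem_restrictScalars.1 hx))) M
      _ ≤ I.restrictScalars F := TwoSidedIdeal.restrictScalars_mul_le _ _
  have hMV : Algebra.adjoin F (M ∪ V : Set B') = ⊤ :=
    eq_top_iff.2 <| hgen ▸ Algebra.adjoin_mono (union_subset_union (fun _ => id) subset_span)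
  have hspan (b : B') : b ∈ N ⊔ I.restrictScalars F :=
    mem_iSup_pow_mul_sup ιS.range.one_mem
      (by simpa using Subalgebra.mul_toSubmodule_le ιS.range ιS.range) hMV
      (TwoSidedIdeal.restrictScalars_mul_le _ _) (TwoSidedIdeal.restrictScalars_mul_le _ _) hMVu b
  have : Module.Finite F N := Module.Finite.iff_fg.2 <| fg_iSup _ fun k =>
    ((hMfg.mul (fg_span (finite_range X))).pow _).mul hMfg
  refine Module.Finite.of_surjective ((I.ringCon.mkₐ F).toLinearMap ∘ₗ N.subtype) fun q => ?_
  obtain ⟨b, rfl⟩ := RingCon.mkₐ_surjective (α := F) _ q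
  obtain ⟨y, hy, z, hz, rfl⟩ := mem_sup.1 (hspan b)
  refine ⟨⟨y, hy⟩, ?_⟩
  rw [map_add, (TwoSidedIdeal.ringCon_mkₐ_eq_zero_iff F I).2
    (TwoSidedIdeal.mem_restrictScalars.1 hz), add_zero]
  rfl

theorem exists_mem_span_of_mem_jacobson [IsSemisimpleRing S] (K : TwoSidedIdeal B')
    {x : K.ringCon.Quotient} (hx : x ∈ (⊥ : Ideal K.ringCon.Quotient).jacobson) :
    ∃ c ∈ TwoSidedIdeal.span (range X), K.ringCon.mkₐ F c = x := by
  set L := K ⊔ TwoSidedIdeal.span (range X)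
  have hKL : K ≤ TwoSidedIdeal.ker (L.ringCon.mkₐ F) := by
    rw [TwoSidedIdeal.ker_ringCon_mkₐ]
    exact le_sup_left
  have : IsSemisimpleRing L.ringCon.Quotient :=
    ((L.ringCon.mkₐ F).comp ιS).toRingHom.isSemisimpleRing_of_surjective <|
      surjective_comp_of_map_eq_zero hgen (RingCon.mkₐ_surjective (α := F) _) fun i =>
        (TwoSidedIdeal.ringCon_mkₐ_eq_zero_iff F L).2
          (TwoSidedIdeal.mem_sup_right (TwoSidedIdeal.subset_span ⟨i, rfl⟩))
  have hρx : K.liftₐ (L.ringCon.mkₐ F) hKL x = 0 :=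
    Ideal.jacobson_bot_le_ker (f := (K.liftₐ (L.ringCon.mkₐ F) hKL).toRingHom)
      (K.liftₐ_surjective (RingCon.mkₐ_surjective _) hKL) hx
  obtain ⟨y, rfl⟩ := RingCon.mkₐ_surjective (α := F) _ x
  obtain ⟨k, hk, c, hc, rfl⟩ :=
    TwoSidedIdeal.mem_sup.1 ((TwoSidedIdeal.ringCon_mkₐ_eq_zero_iff F L).1 hρx)
  exact ⟨c, hc, by rw [map_add, (TwoSidedIdeal.ringCon_mkₐ_eq_zero_iff F K).2 hk, zero_add]⟩

theorem prod_eq_zero_of_mem_jacobson [IsSemisimpleRing S] {u : ℕ} {K : TwoSidedIdeal B'}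
    (hK : ItwoPow B' X u ≤ K) (l : List K.ringCon.Quotient)
    (hl : ∀ x ∈ l, x ∈ (⊥ : Ideal K.ringCon.Quotient).jacobson) (hlen : l.length = u) :
    l.prod = 0 := by
  subst hlen
  choose c hc hcl using fun i : Fin l.length =>
    exists_mem_span_of_mem_jacobson hgen K (hl _ (l.get_mem i))
  have hl : (List.ofFn c).map (K.ringCon.mkₐ F) = l := by
    simp only [List.map_ofFn, comp_def, hcl, List.ofFn_get]
  rw [← hl, ← map_list_prod, TwoSidedIdeal.ringCon_mkₐ_eq_zero_iff]
  exact hK (TwoSidedIdeal.subset_span ⟨c, hc, rfl⟩)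

end FreeProduct

theorem IdSet_Bhat_eq {F : Type} [Field F] {B : Type} [Ring B] [Algebra F B]
    [FiniteDimensional F B] {Sb : Subalgebra F B}
    (hcompl : ∀ b : B, ∃ s ∈ Sb, ∃ r ∈ (⊥ : Ideal B).jacobson, b = s + r) {nB : ℕ}
    (hnil : ∀ l : List B, (∀ x ∈ l, x ∈ (⊥ : Ideal B).jacobson) → l.length = nB →
      l.prod = 0)
    {n : ℕ} (hn : Module.finrank F ↥(Submodule.restrictScalars F ((⊥ : Ideal B).jacobson)) ≤ n)
    {B' : Type} [Ring B'] [Algebra F B'] {ιS : ↥Sb →ₐ[F] B'} {X : Fin n → B'}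
    (huniv : ∀ (C : Type) [Ring C] [Algebra F C] (g : ↥Sb →ₐ[F] C) (y : Fin n → C),
      ∃! φ : B' →ₐ[F] C, (∀ s, φ (ιS s) = g s) ∧ ∀ i, φ (X i) = y i)
    {u : ℕ} (hu : nB ≤ u) : IdSet F (Bhat F B B' X u) = IdSet F B := by
  obtain ⟨r, hr⟩ := ((⊥ : Ideal B).jacobson.restrictScalars F).exists_fin_span_range_eq hn
  obtain ⟨θ, ⟨hθS, hθX⟩, -⟩ := huniv B Sb.val r
  have hθJ : ∀ i, θ (X i) ∈ (⊥ : Ideal B).jacobson := fun i => by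
    rw [hθX, ← Submodule.restrictScalars_mem F, ← hr]
    exact subset_span ⟨i, rfl⟩
  have hspan : span F (range r) ≤ Subalgebra.toSubmodule θ.range :=
    span_le.2 <| by
      rintro _ ⟨i, rfl⟩
      exact ⟨X i, hθX i⟩
  refine IdSet_Bhat_eq_of_surjective (fun b => ?_)
    (ItwoPow_le_ker θ hθJ (List.prod_eq_zero_of_length_le hnil hu))
  obtain ⟨s, hs, j, hj, rfl⟩ := hcompl b
  exact add_mem (⟨ιS ⟨s, hs⟩, hθS _⟩ : s ∈ θ.range) (hspan (hr ▸ hj))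

theorem stmt_18_general (F : Type) [Field F] (B : Type) [Ring B] [Algebra F B]
    [FiniteDimensional F B]
    (Sb : Subalgebra F B) (hss : IsSemisimpleRing ↥Sb)
    (hcompl : ∀ b : B, ∃ s ∈ Sb, ∃ r ∈ (⊥ : Ideal B).jacobson, b = s + r)
    (nB : ℕ)
    (hnil : ∀ l : List B, (∀ x ∈ l, x ∈ (⊥ : Ideal B).jacobson) → l.length = nB →
      l.prod = 0)
    (n : ℕ)
    (hn : Module.finrank F ↥(Submodule.restrictScalars F ((⊥ : Ideal B).jacobson)) ≤ n)
    (B' : Type) [Ring B'] [Algebra F B'] (ιS : ↥Sb →ₐ[F] B') (X : Fin n → B')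
    (huniv : ∀ (C : Type) [Ring C] [Algebra F C] (g : ↥Sb →ₐ[F] C) (y : Fin n → C),
      ∃! φ : B' →ₐ[F] C, (∀ s, φ (ιS s) = g s) ∧ ∀ i, φ (X i) = y i)
    (u : ℕ) :
    (nB ≤ u → IdSet F (Bhat F B B' X u) = IdSet F B) ∧
    FiniteDimensional F (Bhat F B B' X u) ∧
    (∀ l : List (Bhat F B B' X u),
      (∀ x ∈ l, x ∈ (⊥ : Ideal (Bhat F B B' X u)).jacobson) → l.length = u →
      l.prod = 0) := by
  have hgen := adjoin_range_union_range_eq_top huniv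
  have := hss
  exact ⟨fun hu => IdSet_Bhat_eq hcompl hnil hn huniv hu,
    finite_quotient_of_ItwoPow_le hgen le_sup_right,
    prod_eq_zero_of_mem_jacobson hgen le_sup_right⟩

/-- let B be a finite-dimensional F-algebra with maximal semisimple subalgebra B̄
and nilpotency index n_B of J(B), and let B' = B̄ * F{x₁,…,xₙ} (the free product, i.e. the
coproduct of B̄ and the free algebra on n ≥ dim_F J(B) variables, given here by its universal
property).  Let I₁ be the ideal of B' generated by all evaluations of Id(B) on B', I₂ the
ideal generated by x₁,…,xₙ, and B̂_u = B'/(I₁ + I₂ᵘ).  Then: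
(1) if u ≥ n_B then Id(B̂_u) = Id(B);
(2) B̂_u is finite-dimensional over F;
(3) the nilpotency index of J(B̂_u) is at most u. -/
theorem stmt_18 (F : Type) [Field F] (B : Type) [Ring B] [Algebra F B]
    [FiniteDimensional F B]
    (Sb : Subalgebra F B) (hss : IsSemisimpleRing ↥Sb)
    (hcompl : ∀ b : B, ∃ s ∈ Sb, ∃ r ∈ (⊥ : Ideal B).jacobson, b = s + r)
    (hdisj : ∀ b ∈ Sb, b ∈ (⊥ : Ideal B).jacobson → b = 0)
    (nB : ℕ)
    (hnil : ∀ l : List B, (∀ x ∈ l, x ∈ (⊥ : Ideal B).jacobson) → l.length = nB →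
      l.prod = 0)
    (hnB : ∃ l : List B, (∀ x ∈ l, x ∈ (⊥ : Ideal B).jacobson) ∧ l.length + 1 = nB ∧
      l.prod ≠ 0)
    (n : ℕ)
    (hn : Module.finrank F ↥(Submodule.restrictScalars F ((⊥ : Ideal B).jacobson)) ≤ n)
    (B' : Type) [Ring B'] [Algebra F B'] (ιS : ↥Sb →ₐ[F] B') (X : Fin n → B')
    (huniv : ∀ (C : Type) [Ring C] [Algebra F C] (g : ↥Sb →ₐ[F] C) (y : Fin n → C),
      ∃! φ : B' →ₐ[F] C, (∀ s, φ (ιS s) = g s) ∧ ∀ i, φ (X i) = y i)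
    (u : ℕ) :
    (nB ≤ u → IdSet F (Bhat F B B' X u) = IdSet F B) ∧
    FiniteDimensional F (Bhat F B B' X u) ∧
    (∀ l : List (Bhat F B B' X u),
      (∀ x ∈ l, x ∈ (⊥ : Ideal (Bhat F B B' X u)).jacobson) → l.length = u →
      l.prod = 0) :=
  stmt_18_general F B Sb hss hcompl nB hnil n hn B' ιS X huniv u
end
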